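/- Let n ≥ 2 be an integer, c > 0, and F(y) = (1/2)(y − 1)² + (1/c)[(y − 1) + (1 − y^{n+1})/(n+1)]. Suppose φ : ℝ → ℝ is continuously differentiable, even, satisfies φ(0) = φ_max with φ_max > 1, is strictly decreasing on (0, ∞) with φ(x) → 1 as x → +∞, and satisfies φ'(x) = −√(2 F(φ(x))) · φ(x)^{−n} for all x > 0. Then, as an equality of integrals of nonnegative functions with values in [0, ∞], ∫_ℝ [(1/2) φ(x)^{2n} φ'(x)² + (1/2)(φ(x) − 1)²] dx = 2 ∫_1^{φ_max} [F(y) + (1/2)(y − 1)²] · yⁿ · (2 F(y))^{−1/2} dy. -/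

import Mathlib

open MeasureTheory Filter Topology

/-!
By evenness the integral over ℝ is twice the integral over (0, ∞), and `φ` maps (0, ∞)
bijectively onto (1, φmax), so one may substitute `y = φ x` with Jacobian `|φ'|`. Wherever
`F (φ x) > 0` the ODE gives `φ^{2n} φ'² / 2 = F (φ x)` and `|φ'| φⁿ (2 F (φ x))^{-1/2} = 1`, which
makes the two integrands agree. This covers almost every `x > 0`: on an open set where
`F ∘ φ < 0`, or everywhere if the polynomial `F` vanished identically, `φ'` would vanish on an
interval, which is impossible for an injective function; so `F ∘ φ ≥ 0` and its zeros are among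
the finitely many preimages of roots of `F`.
-/

open Set Polynomial
open scoped ENNReal

theorem lintegral_eq_two_mul_setLIntegral_Ioi_of_even {f : ℝ → ℝ≥0∞} (hf : f.Even) :
    ∫⁻ x, f x = 2 * ∫⁻ x in Ioi 0, f x := by
  have hIio : ∫⁻ x in Iio 0, f x = ∫⁻ x in Ioi 0, f x := by
    rw [← (Measure.measurePreserving_neg volume).setLIntegral_comp_preimage_emb
      (Homeomorph.neg ℝ).measurableEmbedding f (Iio 0)]
    simp only [neg_preimage, neg_Iio, neg_zero, hf _]
  rw [← lintegral_add_compl f measurableSet_Iio, compl_Iio, hIio,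
    Measure.restrict_congr_set Ioi_ae_eq_Ici.symm, two_mul]

theorem Function.Even.deriv_neg {f : ℝ → ℝ} (hf : f.Even) (x : ℝ) :
    deriv f (-x) = -deriv f x := by
  simpa [funext hf] using deriv_comp_neg (f := f) (x := -x)

theorem Set.InjOn.frequently_deriv_ne_zero {f : ℝ → ℝ} {s : Set ℝ} {x : ℝ}
    (hf : Differentiable ℝ f) (hs : InjOn f s) (hx : s ∈ 𝓝 x) :
    ∃ᶠ y in 𝓝 x, deriv f y ≠ 0 := by
  intro hzero
  obtain ⟨ε, hε, hball⟩ := Metric.eventually_nhds_iff.mp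
    ((Filter.eventually_of_mem hx fun _ h => h).and hzero)
  have hmem : ∀ y ∈ Icc x (x + ε / 2), y ∈ s ∧ ¬deriv f y ≠ 0 := fun y hy =>
    hball (by rw [Real.dist_eq, abs_lt]; constructor <;> linarith [hy.1, hy.2])
  obtain ⟨d, hd, hslope⟩ := exists_deriv_eq_slope f (by linarith : x < x + ε / 2)
    hf.continuous.continuousOn hf.differentiableOn
  have hconst : f (x + ε / 2) = f x := by
    rw [not_not.mp (hmem d (Ioo_subset_Icc_self hd)).2, eq_comm,
      div_eq_zero_iff, sub_eq_zero] at hslope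
    exact hslope.resolve_right (by linarith)
  linarith [hs (hmem _ ⟨by linarith, le_rfl⟩).1 (hmem _ ⟨le_rfl, by linarith⟩).1 hconst]

theorem StrictAntiOn.lt_of_tendsto_atTop {α β : Type*} [LinearOrder α] [NoMaxOrder α]
    [Preorder β] [TopologicalSpace β] [ClosedIicTopology β] {f : α → β} {a : α} {L : β}
    (hf : StrictAntiOn f (Ioi a)) (hL : Tendsto f atTop (𝓝 L)) {x : α} (hx : a < x) :
    L < f x := by
  have : Nonempty α := ⟨a⟩
  obtain ⟨y, hxy⟩ := exists_gt x
  have hLy : L ≤ f y := le_of_tendsto hL <| by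
    filter_upwards [eventually_gt_atTop y] with t ht
    exact (hf (hx.trans hxy) (hx.trans (hxy.trans ht)) ht).le
  exact hLy.trans_lt (hf hx (hx.trans hxy) hxy)

theorem StrictAntiOn.lt_of_continuousWithinAt {α β : Type*} [LinearOrder α] [TopologicalSpace α]
    [OrderTopology α] [DenselyOrdered α] [NoMaxOrder α] [Preorder β] [TopologicalSpace β]
    [ClosedIciTopology β] {f : α → β} {a : α}
    (hf : StrictAntiOn f (Ioi a)) (hc : ContinuousWithinAt f (Ioi a) a) {x : α} (hx : a < x) :
    f x < f a := by
  obtain ⟨z, haz, hzx⟩ := exists_between hx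
  have hza : f z ≤ f a := ge_of_tendsto hc <| by
    filter_upwards [Ioo_mem_nhdsGT haz] with t ht
    exact (hf ht.1 haz ht.2).le
  exact (hf haz hx hzx).trans_le hza

theorem StrictAntiOn.image_Ioi_eq_Ioo {α β : Type*} [ConditionallyCompleteLinearOrder α]
    [TopologicalSpace α] [OrderTopology α] [DenselyOrdered α] [NoMaxOrder α] [LinearOrder β]
    [TopologicalSpace β] [OrderClosedTopology β] {f : α → β} {a : α} {L : β}
    (hf : StrictAntiOn f (Ioi a)) (hc : ContinuousOn f (Ici a)) (hL : Tendsto f atTop (𝓝 L)) :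
    f '' Ioi a = Ioo L (f a) := by
  refine Subset.antisymm ?_ fun y hy => ?_
  · rintro _ ⟨x, hx, rfl⟩
    exact ⟨hf.lt_of_tendsto_atTop hL hx,
      hf.lt_of_continuousWithinAt ((hc a self_mem_Ici).mono Ioi_subset_Ici_self) hx⟩
  obtain ⟨X, hXy, haX⟩ :=
    ((hL.eventually (eventually_lt_nhds hy.1)).and (eventually_ge_atTop a)).exists
  obtain ⟨x, hx, rfl⟩ :=
    intermediate_value_Icc' haX (hc.mono Icc_subset_Ici_self) ⟨hXy.le, hy.2.le⟩
  exact ⟨x, hx.1.lt_of_ne (by rintro rfl; exact hy.2.ne rfl), rfl⟩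

theorem Set.InjOn.nonneg_of_deriv_eq_zero {f G : ℝ → ℝ} {U : Set ℝ} (hf : Differentiable ℝ f)
    (hinj : InjOn f U) (hU : IsOpen U) (hG : ContinuousOn G U)
    (hflat : ∀ x ∈ U, G x < 0 → deriv f x = 0) {x : ℝ} (hx : x ∈ U) : 0 ≤ G x := by
  by_contra! hneg
  have hnhds : ∀ᶠ y in 𝓝 x, y ∈ U ∧ G y < 0 :=
    (hU.eventually_mem hx).and
      ((hG.continuousAt (hU.mem_nhds hx)).eventually (eventually_lt_nhds hneg))
  obtain ⟨y, hy, hyU, hyG⟩ :=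
    ((hinj.frequently_deriv_ne_zero hf (hU.mem_nhds hx)).and_eventually hnhds).exists
  exact hy (hflat y hyU hyG)

theorem Set.InjOn.finite_setOf_eval_eq_zero {f : ℝ → ℝ} {p : ℝ[X]} {U : Set ℝ}
    (hf : Differentiable ℝ f) (hinj : InjOn f U) (hU : IsOpen U) (hUne : U.Nonempty)
    (hflat : ∀ x ∈ U, p.eval (f x) = 0 → deriv f x = 0) :
    {x ∈ U | p.eval (f x) = 0}.Finite := by
  by_cases hp : p = 0
  · obtain ⟨x, hx⟩ := hUne
    obtain ⟨y, hy, hyU⟩ :=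
      ((hinj.frequently_deriv_ne_zero hf (hU.mem_nhds hx)).and_eventually
        (hU.eventually_mem hx)).exists
    exact absurd (hflat y hyU (by simp [hp])) hy
  refine Finite.of_finite_image ((p.finite_setOfPred_isRoot hp).subset ?_)
    (hinj.mono fun _ h => h.1)
  rintro _ ⟨x, hx, rfl⟩
  exact hx.2

theorem momentum_density_eq {y P a d : ℝ} (n : ℕ) (hy : 0 < y) (hP : 0 < P)
    (hd : d = -√(2 * P) * y ^ (-(n : ℤ))) :
    1 / 2 * y ^ (2 * n) * d ^ 2 + a = |d| * ((P + a) * y ^ n * (2 * P) ^ (-(1 / 2) : ℝ)) := by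
  have hyn : y ^ (-(n : ℤ)) = (y ^ n)⁻¹ := by rw [zpow_neg, zpow_natCast]
  have hsqrt : √(2 * P) * (2 * P) ^ (-(1 / 2) : ℝ) = 1 := by
    rw [Real.sqrt_eq_rpow, ← Real.rpow_add (by positivity)]
    norm_num
  have hyn0 : y ^ n ≠ 0 := by positivity
  rw [hd, hyn, neg_mul, abs_neg, abs_of_nonneg (by positivity), neg_sq, mul_pow,
    Real.sq_sqrt (by positivity), pow_mul']
  calc 1 / 2 * (y ^ n) ^ 2 * (2 * P * (y ^ n)⁻¹ ^ 2) + a = P + a := by field_simp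
    _ = (P + a) * ((y ^ n)⁻¹ * y ^ n) * (√(2 * P) * (2 * P) ^ (-(1 / 2) : ℝ)) := by
      rw [hsqrt, inv_mul_cancel₀ hyn0]; ring
    _ = _ := by ring

theorem stmt_4 (n : ℕ) (c : ℝ)
    (F : ℝ → ℝ)
    (hF : ∀ y, F y = (1 / 2) * (y - 1) ^ 2 + (1 / c) * ((y - 1) + (1 - y ^ (n + 1)) / (n + 1)))
    (φ : ℝ → ℝ) (φmax : ℝ)
    (hreg : ContDiff ℝ 1 φ) (heven : ∀ x, φ (-x) = φ x)
    (h0 : φ 0 = φmax)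
    (hanti : StrictAntiOn φ (Set.Ioi 0))
    (hlim : Tendsto φ atTop (𝓝 1))
    (hode : ∀ x, 0 < x → deriv φ x = -Real.sqrt (2 * F (φ x)) * φ x ^ (-(n : ℤ))) :
    ∫⁻ x : ℝ, ENNReal.ofReal
        ((1 / 2) * φ x ^ (2 * n) * (deriv φ x) ^ 2 + (1 / 2) * (φ x - 1) ^ 2) =
      2 * ∫⁻ y in Set.Ioo (1 : ℝ) φmax, ENNReal.ofReal
        ((F y + (1 / 2) * (y - 1) ^ 2) * y ^ n * (2 * F y) ^ (-(1 / 2) : ℝ)) := by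
  have hφ : Differentiable ℝ φ := hreg.differentiable one_ne_zero
  have hinj : InjOn φ (Ioi 0) := hanti.injOn
  obtain ⟨p, hp⟩ : ∃ p : ℝ[X], F = fun y => p.eval y :=
    ⟨C (1 / 2) * (X - 1) ^ 2 + C (1 / c) * (X - 1 + C ((n : ℝ) + 1)⁻¹ * (1 - X ^ (n + 1))),
      funext fun y => by
        simp only [hF, eval_add, eval_mul, eval_pow, eval_sub, eval_C, eval_X, eval_one]; ring⟩
  have hflat : ∀ x ∈ Ioi 0, F (φ x) ≤ 0 → deriv φ x = 0 := fun x hx hFx => by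
    rw [hode x hx, Real.sqrt_eq_zero'.mpr (by linarith), neg_zero, zero_mul]
  have hnonneg : ∀ x ∈ Ioi 0, 0 ≤ F (φ x) := fun x =>
    hinj.nonneg_of_deriv_eq_zero hφ isOpen_Ioi
      (hp ▸ (p.continuous.comp hφ.continuous).continuousOn) fun x hx h => hflat x hx h.le
  have hzeros : {x ∈ Ioi 0 | F (φ x) = 0}.Finite := by
    subst hp
    exact hinj.finite_setOf_eval_eq_zero hφ isOpen_Ioi nonempty_Ioi fun x hx h => hflat x hx h.le
  have hpos : ∀ᵐ x, x ∈ Ioi 0 → 0 < F (φ x) := by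
    filter_upwards [measure_eq_zero_iff_ae_notMem.mp (hzeros.measure_zero volume)] with x hx0 hx
    exact (hnonneg x hx).lt_of_ne' fun h => hx0 ⟨hx, h⟩
  rw [lintegral_eq_two_mul_setLIntegral_Ioi_of_even fun x => by
      simp only [heven, Function.Even.deriv_neg heven x, neg_sq],
    ← h0, ← hanti.image_Ioi_eq_Ioo hreg.continuous.continuousOn hlim,
    lintegral_image_eq_lintegral_abs_deriv_mul measurableSet_Ioi
      (fun x _ => (hφ x).hasDerivAt.hasDerivWithinAt) hinj]
  congr 1
  refine setLIntegral_congr_fun_ae measurableSet_Ioi ?_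
  filter_upwards [hpos] with x hFx hx
  have hφx : 0 < φ x := one_pos.trans (hanti.lt_of_tendsto_atTop hlim hx)
  rw [← ENNReal.ofReal_mul (abs_nonneg _),
    momentum_density_eq n hφx (hFx hx) (hode x hx)]
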